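/- Let ω be an almost everywhere strictly positive weight. Suppose there exist q > 1, δ ∈ (1/q, 1) and C > 0 such that A₂(E)/|S|² ≤ C (ω_{[2q]}(E)/ω_{[2q]}(S))^δ for every Carleson square S ⊂ 𝔻 and every measurable E ⊂ S, where A₂(E) = ∫_E (1-|z|²)² dA(z) and ω_{[2q]}(E) = ∫_E ω(z)(1-|z|²)^{2q} dA(z). Then ω ∈ B_q. -/

import Mathlib

open MeasureTheory Complex Set Filter Topology
open scoped ENNReal NNReal

noncomputable section

/-- The normalized Lebesgue area measure `dA = dx dy / π` on `ℂ` (the unit disc has mass 1). -/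
def dA : Measure ℂ := (ENNReal.ofReal Real.pi)⁻¹ • volume

/-- The open unit disc `𝔻 = {z : |z| < 1}`. -/
def uD : Set ℂ := Metric.ball (0 : ℂ) 1

/-- The Carleson square `S(a)`, for `a ∈ 𝔻 \ {0}`:
`S(a) = {w ∈ 𝔻 : |a| < |w| < 1, |arg (a e^{-i arg w})| < (1-|a|)/2}`. -/
def cSq (a : ℂ) : Set ℂ :=
  {w : ℂ | ‖a‖ < ‖w‖ ∧ ‖w‖ < 1 ∧
    |Complex.arg (a * (starRingEnd ℂ) w)| < (1 - ‖a‖) / 2}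

/-- Euclidean area of a set in `ℂ`. -/
def eArea (E : Set ℂ) : ℝ := (volume E).toReal

/-- `∫_E ω dA`. -/
def wInt (ω : ℂ → ℝ) (E : Set ℂ) : ℝ := ∫ z in E, ω z ∂dA

/-- A weight: a nonnegative function integrable over the unit disc w.r.t. `dA`. -/
def IsWeight (ω : ℂ → ℝ) : Prop := (∀ z, 0 ≤ ω z) ∧ IntegrableOn ω uD dA

/-- Almost everywhere strictly positive on `𝔻`. -/
def AEPos (ω : ℂ → ℝ) : Prop := ∀ᵐ z ∂(dA.restrict uD), 0 < ω z

/-- The quantity whose supremum over Carleson squares defines the `B_q` constant. -/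
def BqAt (q : ℝ) (ω : ℂ → ℝ) (a : ℂ) : ℝ :=
  ((∫ z in cSq a, ω z * (1 - ‖z‖ ^ 2) ^ (2 * q) ∂dA) / eArea (cSq a) ^ 2) *
    ((∫ z in cSq a, ω z ^ (-(1 / (q - 1))) ∂dA) / eArea (cSq a) ^ 2) ^ (q - 1)

/-- The Bekollé–Bonami type class `B_q` (`1 < q < ∞`), for a.e. strictly positive weights. -/
def MemBq (q : ℝ) (ω : ℂ → ℝ) : Prop :=
  1 < q ∧ AEPos ω ∧ ∃ C : ℝ, ∀ a : ℂ, a ≠ 0 → ‖a‖ < 1 → BqAt q ω a ≤ C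

/-- The constant `B_q(ω)`, i.e. the supremum over all Carleson squares. -/
def BqNorm (q : ℝ) (ω : ℂ → ℝ) : ℝ :=
  sSup (BqAt q ω '' {a : ℂ | a ≠ 0 ∧ ‖a‖ < 1})

/-- `B_∞ = ⋃_{q>1} B_q`. -/
def MemBinf (ω : ℂ → ℝ) : Prop := ∃ q : ℝ, MemBq q ω

/-- `‖f‖_{A^p_ω}^p = ∫_𝔻 |f|^p ω dA` (also used as the `L^p_ω` "norm" to the `p`). -/
def ApPow (p : ℝ) (ω : ℂ → ℝ) (f : ℂ → ℂ) : ℝ :=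
  ∫ z in uD, ‖f z‖ ^ p * ω z ∂dA

/-- Membership in the weighted Bergman space `A^p_ω`. -/
def MemAp (p : ℝ) (ω : ℂ → ℝ) (f : ℂ → ℂ) : Prop :=
  DifferentiableOn ℂ f uD ∧
    IntegrableOn (fun z => ‖f z‖ ^ p * ω z) uD dA

/-- `Z : ι → ℂ` is the zero sequence (with multiplicities) of `f` on `𝔻`:
every point of `𝔻` is hit by `Z` exactly `ord_f` many times. -/
def IsZeroSeqOf {ι : Type} (f : ℂ → ℂ) (Z : ι → ℂ) : Prop :=
  (∀ i, Z i ∈ uD) ∧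
    ∀ z ∈ uD, {i | Z i = z}.Finite ∧
      ∀ h : AnalyticAt ℂ f z, analyticOrderAt f z = (Nat.card {i | Z i = z} : ℕ∞)

/-- `Z : ι → ℂ` is a subsequence of the zero sequence of `f` (multiplicities counted). -/
def IsZeroSubseqOf {ι : Type} (f : ℂ → ℂ) (Z : ι → ℂ) : Prop :=
  (∀ i, Z i ∈ uD ∧ f (Z i) = 0) ∧
    ∀ z ∈ uD, {i | Z i = z}.Finite ∧
      ∀ h : AnalyticAt ℂ f z, (Nat.card {i | Z i = z} : ℕ∞) ≤ analyticOrderAt f z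

/-- `Z` is a zero set for `A^p_ω`: the zero sequence of some nonzero `f ∈ A^p_ω`. -/
def IsZeroSetFor (p : ℝ) (ω : ℂ → ℝ) {ι : Type} (Z : ι → ℂ) : Prop :=
  ∃ f : ℂ → ℂ, MemAp p ω f ∧ (∃ z ∈ uD, f z ≠ 0) ∧ IsZeroSeqOf f Z

/-- `k_Z(z) = (|z|²/2) ∑_{a ∈ Z} (1-|a|²)²/|1-conj(a) z|²`. -/
def kZ {ι : Type} (Z : ι → ℂ) (z : ℂ) : ℝ :=
  ‖z‖ ^ 2 / 2 *
    ∑' i, (1 - ‖Z i‖ ^ 2) ^ 2 / ‖1 - (starRingEnd ℂ) (Z i) * z‖ ^ 2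

/-- `W_Z = e^{k_Z}`. -/
def WZ {ι : Type} (Z : ι → ℂ) (z : ℂ) : ℝ := Real.exp (kZ Z z)

/-- One factor of the infinite product appearing in Luecking's function `h`. -/
def zfac (a z : ℂ) : ℝ :=
  ‖(a - z) / (1 - (starRingEnd ℂ) a * z)‖ *
    Real.exp ((1 - ‖(a - z) / (1 - (starRingEnd ℂ) a * z)‖ ^ 2) / 2)

/-- Luecking's auxiliary function `h`. -/
def hFun {ι : Type} (f : ℂ → ℂ) (Z : ι → ℂ) (z : ℂ) : ℝ :=
  ‖f z‖ / ∏' i, zfac (Z i) z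

/-- Pseudohyperbolic distance `ρ(z,w) = |(z-w)/(1-conj(z)w)|`. -/
def pDist (z w : ℂ) : ℝ := ‖(z - w) / (1 - (starRingEnd ℂ) z * w)‖

/-- Pseudohyperbolic disc `Δ(z,r)`. -/
def pDisc (z : ℂ) (r : ℝ) : Set ℂ := {w : ℂ | ‖w‖ < 1 ∧ pDist z w < r}

/-- A harmonic function on the (simply connected) unit disc,
characterized as the real part of an analytic function. -/
def HarmonicOnDisc (h : ℂ → ℝ) : Prop :=
  ∃ g : ℂ → ℂ, DifferentiableOn ℂ g uD ∧ ∀ z ∈ uD, h z = (g z).re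

/-- `ω̂(r) = ∫_r^1 ω(s) ds` for a radial weight given by its profile `ω : ℝ → ℝ`. -/
def omHat (ω : ℝ → ℝ) (r : ℝ) : ℝ := ∫ s in r..1, ω s

/-- A radial weight (its profile on `[0,1)`) in the class `D̂`. -/
def IsRadialDhat (ω : ℝ → ℝ) : Prop :=
  (∀ s, 0 ≤ ω s) ∧ IntegrableOn ω (Set.Icc 0 1) ∧
    (∀ r, 0 ≤ r → r < 1 → 0 < omHat ω r) ∧
    ∃ C : ℝ, 1 ≤ C ∧ ∀ r, 0 ≤ r → r < 1 → omHat ω r ≤ C * omHat ω ((1 + r) / 2)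

/-- The radial weight on `𝔻` induced by a profile `ω : ℝ → ℝ`. -/
def rad (ω : ℝ → ℝ) : ℂ → ℝ := fun z => ω (‖z‖)

/-- `ω_x = ∫_0^1 s^x ω(s) ds`. -/
def omMom (ω : ℝ → ℝ) (x : ℝ) : ℝ := ∫ s in (0:ℝ)..1, s ^ x * ω s

/-- The reproducing kernel `B^ω_z(ζ) = ∑_{n ≥ 0} (conj(z) ζ)^n / (2 ω_{2n+1})` of `A²_ω`. -/
def BKer (ω : ℝ → ℝ) (z ζ : ℂ) : ℂ :=
  ∑' n : ℕ, ((starRingEnd ℂ) z * ζ) ^ n / ((2 * omMom ω (2 * n + 1) : ℝ) : ℂ)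

/-- `K^ω_z(ζ) = |B^ω_z(ζ)|² / ‖B^ω_z‖²_{A²_ω}`. -/
def KKer (ω : ℝ → ℝ) (z ζ : ℂ) : ℝ :=
  ‖BKer ω z ζ‖ ^ 2 /
    ∫ u in uD, ‖BKer ω z u‖ ^ 2 * ω (‖u‖) ∂dA

/-- `∫⁻_𝔻 |f|^p dμ` (as an extended real). -/
def muInt (p : ℝ) (μ : Measure ℂ) (f : ℂ → ℂ) : ℝ≥0∞ :=
  ∫⁻ z in uD, ENNReal.ofReal (‖f z‖ ^ p) ∂μ

/-- `μ` is a `p`-Carleson measure for `A^p_ω`. -/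
def IsCarleson (p : ℝ) (ω : ℂ → ℝ) (μ : Measure ℂ) : Prop :=
  ∃ C : ℝ, 0 < C ∧ ∀ f : ℂ → ℂ, MemAp p ω f →
    muInt p μ f ≤ ENNReal.ofReal (C * ApPow p ω f)

/-- `μ` is a sampling measure for `A^p_ω`. -/
def IsSampling (p : ℝ) (ω : ℂ → ℝ) (μ : Measure ℂ) : Prop :=
  ∃ C : ℝ, 0 < C ∧ ∀ f : ℂ → ℂ, MemAp p ω f →
    ENNReal.ofReal (C⁻¹ * ApPow p ω f) ≤ muInt p μ f ∧
      muInt p μ f ≤ ENNReal.ofReal (C * ApPow p ω f)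

/-- `G` is a dominating set for `A^p_ω`. -/
def IsDominating (p : ℝ) (ω : ℂ → ℝ) (G : Set ℂ) : Prop :=
  ∃ δ : ℝ, 0 < δ ∧ ∀ f : ℂ → ℂ, MemAp p ω f →
    δ * ApPow p ω f ≤ ∫ z in G, ‖f z‖ ^ p * ω z ∂dA

/-- `‖M_ω(μ)‖_{L^∞} = sup_S μ(S)/ω(S)` over Carleson squares. -/
def MmaxNorm (ω : ℂ → ℝ) (μ : Measure ℂ) : ℝ :=
  sSup ((fun a => (μ (cSq a)).toReal / wInt ω (cSq a)) ''
    {a : ℂ | a ≠ 0 ∧ ‖a‖ < 1})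

/-- The class `C_q`. -/
def MemCq (q : ℝ) (ω : ℂ → ℝ) : Prop :=
  1 < q ∧ AEPos ω ∧ ∃ r : ℝ, 0 < r ∧ r < 1 ∧ ∃ C : ℝ, 0 < C ∧
    ∀ z : ℂ, ‖z‖ < 1 →
      wInt ω (pDisc z r) ^ (1 / q) *
        (∫ u in pDisc z r, ω u ^ (-(1 / (q - 1))) ∂dA) ^ ((q - 1) / q) ≤
          C * eArea (pDisc z r)

/-- `C_∞ = ⋃_{q>1} C_q`. -/
def MemCinf (ω : ℂ → ℝ) : Prop := ∃ q : ℝ, MemCq q ω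

/-- The class `D̂(𝔻)` of (possibly non-radial) weights doubling on Carleson squares. -/
def DhatD (ω : ℂ → ℝ) : Prop :=
  ∃ C : ℝ, 0 < C ∧ ∀ a : ℂ, a ≠ 0 → ‖a‖ < 1 →
    wInt ω (cSq a) ≤
      C * wInt ω (cSq ((((1 + ‖a‖) / 2 : ℝ) : ℂ) * (a / (‖a‖ : ℂ))))

/-- Weak convergence of a sequence of measures against nonnegative continuous
functions compactly supported in `𝔻`. -/
def WeakConvD (μn : ℕ → Measure ℂ) (μ : Measure ℂ) : Prop :=
  ∀ h : ℂ → ℝ, Continuous h → HasCompactSupport h → tsupport h ⊆ uD → (∀ z, 0 ≤ h z) →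
    Tendsto (fun n => ∫ z, h z ∂(μn n)) atTop (nhds (∫ z, h z ∂μ))

/-- The norm of the embedding `Id : A^p_ω → L^p_μ`. -/
def embNorm (p : ℝ) (ω : ℂ → ℝ) (μ : Measure ℂ) : ℝ :=
  sInf {c : ℝ | 0 ≤ c ∧ ∀ f : ℂ → ℂ, MemAp p ω f →
    muInt p μ f ≤ ENNReal.ofReal (c ^ p * ApPow p ω f)}

/-! With `u = (1 - |z|²)²` and `g = ω (1 - |z|²)^{2q}` one has `ω^{-1/(q-1)} = (u / g)^{1/(q-1)} u`,
so the integral of `ω^{-1/(q-1)}` over a square `S` is `∫_S F^{1/(q-1)} u dA` with `F = u / g`.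
On a level set `{F > t}` we have `g < u / t`, so the hypothesis gives the weak-type bound
`∫_{F > t} u ≲ t^{-δ/(1-δ)}`. Since `δ > 1/q` means exactly `1/(q-1) < δ/(1-δ)`, the layer-cake
formula upgrades it to a strong `L^{1/(q-1)}` bound, with the powers of `|S|²` and `ω_{[2q]}(S)`
cancelling in `B_q`. -/

open Real

theorem le_rpow_one_div_one_sub_of_le_mul_rpow {m a δ : ℝ} (hm : 0 ≤ m) (ha : 0 ≤ a)
    (hδ : δ < 1) (h : m ≤ a * m ^ δ) : m ≤ a ^ (1 / (1 - δ)) := by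
  rcases hm.eq_or_lt with rfl | hm
  · exact rpow_nonneg ha _
  have h1δ : 0 < 1 - δ := by linarith
  have hpow : m ^ (1 - δ) ≤ a := by
    rwa [rpow_sub hm, rpow_one, div_le_iff₀ (rpow_pos_of_pos hm δ)]
  calc m = (m ^ (1 - δ)) ^ (1 / (1 - δ)) := by
        rw [← rpow_mul hm.le, mul_one_div_cancel h1δ.ne', rpow_one]
    _ ≤ a ^ (1 / (1 - δ)) := rpow_le_rpow (rpow_nonneg hm.le _) hpow (by positivity)

section LayerCake

theorem lintegral_Ioc_zero_const_mul_rpow {p T : ℝ} (hp : 0 < p) (hT : 0 ≤ T) {M : ℝ}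
    (hM : 0 ≤ M) :
    ∫⁻ t in Ioc 0 T, ENNReal.ofReal (M * t ^ (p - 1)) = ENNReal.ofReal (M * (T ^ p / p)) := by
  have hint : IntegrableOn (fun t : ℝ => t ^ (p - 1)) (Ioc 0 T) :=
    (intervalIntegral.intervalIntegrable_rpow' (by linarith)).1
  rw [← ofReal_integral_eq_lintegral_ofReal (hint.const_mul M)
    (ae_restrict_of_forall_mem measurableSet_Ioc fun t ht => by
      have := ht.1; positivity),
    integral_const_mul, ← intervalIntegral.integral_of_le hT,
    integral_rpow (Or.inl (by linarith)), sub_add_cancel, zero_rpow hp.ne', sub_zero]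

theorem lintegral_Ioi_const_mul_rpow {s T : ℝ} (hs : s < 0) (hT : 0 < T) {K : ℝ} (hK : 0 ≤ K) :
    ∫⁻ t in Ioi T, ENNReal.ofReal (K * t ^ (s - 1)) = ENNReal.ofReal (K * (T ^ s / -s)) := by
  have hint : IntegrableOn (fun t : ℝ => t ^ (s - 1)) (Ioi T) :=
    integrableOn_Ioi_rpow_of_lt (by linarith) hT
  rw [← ofReal_integral_eq_lintegral_ofReal (hint.const_mul K)
    (ae_restrict_of_forall_mem measurableSet_Ioi fun t ht => by
      have : 0 < t := hT.trans ht; positivity),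
    integral_const_mul, integral_Ioi_rpow_of_lt (by linarith) hT, sub_add_cancel, neg_div,
    div_neg]

variable {α : Type*} [MeasurableSpace α]

theorem lintegral_rpow_le_add_of_meas_lt_le (ρ : Measure α) {f : α → ℝ}
    (hf0 : 0 ≤ᵐ[ρ] f) (hf : AEMeasurable f ρ) {p r K M T : ℝ} (hp : 0 < p) (hpr : p < r)
    (hK : 0 ≤ K) (hM : 0 ≤ M) (hT : 0 < T) (hρ : ρ univ ≤ ENNReal.ofReal M)
    (hweak : ∀ t, 0 < t → ρ {x | t < f x} ≤ ENNReal.ofReal (K * t ^ (-r))) :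
    ∫⁻ x, ENNReal.ofReal (f x ^ p) ∂ρ ≤
      ENNReal.ofReal (M * T ^ p + p / (r - p) * K * T ^ (p - r)) := by
  rw [lintegral_rpow_eq_lintegral_meas_lt_mul ρ hf0 hf hp, ← Ioc_union_Ioi_eq_Ioi hT.le]
  calc ENNReal.ofReal p *
        ∫⁻ t in Ioc 0 T ∪ Ioi T, ρ {x | t < f x} * ENNReal.ofReal (t ^ (p - 1))
      ≤ ENNReal.ofReal p * ((∫⁻ t in Ioc 0 T, ENNReal.ofReal (M * t ^ (p - 1))) +
          ∫⁻ t in Ioi T, ENNReal.ofReal (K * t ^ (p - r - 1))) := by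
        gcongr
        refine (lintegral_union_le _ _ _).trans (add_le_add ?_ ?_)
        · refine setLIntegral_mono' measurableSet_Ioc fun t _ => ?_
          rw [ENNReal.ofReal_mul hM]
          gcongr
          exact (measure_mono (subset_univ _)).trans hρ
        · refine setLIntegral_mono' measurableSet_Ioi fun t ht => ?_
          have ht0 : 0 < t := hT.trans ht
          rw [show K * t ^ (p - r - 1) = K * t ^ (-r) * t ^ (p - 1) by
              rw [mul_assoc, ← rpow_add ht0]; ring_nf,
            ENNReal.ofReal_mul (by positivity)]
          gcongr
          exact hweak t ht0
    _ = ENNReal.ofReal (M * T ^ p + p / (r - p) * K * T ^ (p - r)) := by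
        rw [lintegral_Ioc_zero_const_mul_rpow hp hT.le hM,
          lintegral_Ioi_const_mul_rpow (by linarith) hT hK, ← ENNReal.ofReal_add (by positivity)
          (mul_nonneg hK (div_nonneg (rpow_nonneg hT.le _) (by linarith))),
          ← ENNReal.ofReal_mul hp.le, neg_sub]
        congr 1
        field_simp

theorem lintegral_rpow_le_of_meas_lt_le (ρ : Measure α) {f : α → ℝ}
    (hf0 : 0 ≤ᵐ[ρ] f) (hf : AEMeasurable f ρ) {p r K M : ℝ} (hp : 0 < p) (hpr : p < r)
    (hK : 0 < K) (hM : 0 < M) (hρ : ρ univ ≤ ENNReal.ofReal M)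
    (hweak : ∀ t, 0 < t → ρ {x | t < f x} ≤ ENNReal.ofReal (K * t ^ (-r))) :
    ∫⁻ x, ENNReal.ofReal (f x ^ p) ∂ρ ≤
      ENNReal.ofReal (r / (r - p) * K ^ (p / r) * M ^ (1 - p / r)) := by
  have hr : 0 < r := hp.trans hpr
  set T := (K / M) ^ (1 / r)
  have hT : 0 < T := by positivity
  refine (lintegral_rpow_le_add_of_meas_lt_le ρ hf0 hf hp hpr hK.le hM.le hT hρ
    hweak).trans_eq (congrArg _ ?_)
  have hTr : T ^ r = K / M := by
    rw [← rpow_mul (by positivity), one_div_mul_cancel hr.ne', rpow_one]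
  have hTp : M * T ^ p = K ^ (p / r) * M ^ (1 - p / r) := by
    rw [← rpow_mul (by positivity), div_rpow hK.le hM.le, rpow_sub hM, rpow_one]
    field_simp
  have hTpr : K * T ^ (p - r) = M * T ^ p := by
    rw [rpow_sub hT, hTr]
    field_simp
  have hrp : r - p ≠ 0 := (sub_pos.2 hpr).ne'
  rw [mul_assoc (p / (r - p)), hTpr, hTp]
  field_simp
  ring

end LayerCake

section KermanTorchinsky

variable {α : Type*} [MeasurableSpace α] {μ : Measure α} {u g : α → ℝ} {L N δ : ℝ}

theorem setIntegral_le_rpow_of_mul_le (hu : Integrable u μ) (hu0 : 0 ≤ᵐ[μ] u)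
    (hg0 : 0 ≤ᵐ[μ] g) (hL : 0 ≤ L) (hN : 0 < N) (hδ0 : 0 ≤ δ) (hδ1 : δ < 1)
    (h : ∀ E, MeasurableSet E → ∫ x in E, u x ∂μ ≤ L * ((∫ x in E, g x ∂μ) / N) ^ δ)
    {E : Set α} (hE : MeasurableSet E) {t : ℝ} (ht : 0 < t)
    (htE : ∀ᵐ x ∂μ, x ∈ E → t * g x ≤ u x) :
    ∫ x in E, u x ∂μ ≤ (L * (t * N) ^ (-δ)) ^ (1 / (1 - δ)) := by
  set m := ∫ x in E, u x ∂μ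
  have hm : 0 ≤ m := integral_nonneg_of_ae (ae_restrict_of_ae hu0)
  have hgE : ∫ x in E, g x ∂μ ≤ m / t := by
    rw [← integral_div]
    exact integral_mono_of_nonneg (ae_restrict_of_ae hg0) (hu.integrableOn.div_const t)
      ((ae_restrict_iff' hE).2 (htE.mono fun x hx hxE => (le_div_iff₀' ht).2 (hx hxE)))
  refine le_rpow_one_div_one_sub_of_le_mul_rpow hm (by positivity) hδ1 ?_
  calc m ≤ L * ((∫ x in E, g x ∂μ) / N) ^ δ := h E hE
    _ ≤ L * (m / t / N) ^ δ := by
        have : 0 ≤ ∫ x in E, g x ∂μ := integral_nonneg_of_ae (ae_restrict_of_ae hg0)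
        gcongr
    _ = L * (t * N) ^ (-δ) * m ^ δ := by
        rw [div_div, div_rpow hm (by positivity), rpow_neg (by positivity)]
        ring

theorem integral_rpow_div_mul_le_of_measurable (hu : Integrable u μ) (hum : Measurable u)
    (hgm : Measurable g) (hu0 : 0 ≤ᵐ[μ] u) (hg0 : 0 ≤ᵐ[μ] g) (hL : 0 < L) (hN : 0 < N)
    (hgN : ∫ x, g x ∂μ ≤ N) (hδ0 : 0 < δ) (hδ1 : δ < 1)
    (h : ∀ E, MeasurableSet E → ∫ x in E, u x ∂μ ≤ L * ((∫ x in E, g x ∂μ) / N) ^ δ)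
    {p : ℝ} (hp : 0 < p) (hpδ : p < δ / (1 - δ)) :
    ∫ x, (u x / g x) ^ p * u x ∂μ ≤ δ / (1 - δ) / (δ / (1 - δ) - p) * L * (L / N) ^ p := by
  set r := δ / (1 - δ) with hr_def
  set ρ := μ.withDensity fun x => ENNReal.ofReal (u x)
  have hρ : ∀ s, MeasurableSet s → ρ s = ENNReal.ofReal (∫ x in s, u x ∂μ) := fun s hs => by
    rw [withDensity_apply _ hs,
      ofReal_integral_eq_lintegral_ofReal hu.integrableOn (ae_restrict_of_ae hu0)]
  have hFm : Measurable fun x => u x / g x := hum.div hgm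
  have hF0 : 0 ≤ᵐ[μ] fun x => u x / g x := by
    filter_upwards [hu0, hg0] with x hux hgx using div_nonneg hux hgx
  have hρuniv : ρ univ ≤ ENNReal.ofReal L := by
    have hg : 0 ≤ (∫ x, g x ∂μ) / N := div_nonneg (integral_nonneg_of_ae hg0) hN.le
    rw [hρ univ MeasurableSet.univ]
    refine ENNReal.ofReal_le_ofReal ((h univ MeasurableSet.univ).trans ?_)
    rw [setIntegral_univ]
    exact mul_le_of_le_one_right hL.le (rpow_le_one hg ((div_le_one hN).2 hgN) hδ0.le)
  have hweak : ∀ t, 0 < t →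
      ρ {x | t < u x / g x} ≤ ENNReal.ofReal (L ^ (1 / (1 - δ)) * N ^ (-r) * t ^ (-r)) := by
    intro t ht
    have hE : MeasurableSet {x | t < u x / g x} := measurableSet_lt measurable_const hFm
    rw [hρ _ hE]
    refine ENNReal.ofReal_le_ofReal
      ((setIntegral_le_rpow_of_mul_le hu hu0 hg0 hL.le hN hδ0.le hδ1 h hE ht ?_).trans_eq ?_)
    · filter_upwards [hu0, hg0] with x hux hgx hx
      rcases hgx.eq_or_lt with hgx | hgx
      · rw [← hgx, Pi.zero_apply, mul_zero]
        exact hux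
      · exact ((lt_div_iff₀ hgx).1 hx).le
    · rw [mul_rpow hL.le (by positivity), ← rpow_mul (by positivity),
        show -δ * (1 / (1 - δ)) = -r by ring, mul_rpow ht.le hN.le]
      ring
  have hlayer := lintegral_rpow_le_of_meas_lt_le ρ
    ((withDensity_absolutelyContinuous _ _).ae_le hF0) hFm.aemeasurable hp hpδ
    (by positivity) hL hρuniv hweak
  have hlint : ∫⁻ x, ENNReal.ofReal ((u x / g x) ^ p) ∂ρ =
      ∫⁻ x, ENNReal.ofReal ((u x / g x) ^ p * u x) ∂μ := by
    rw [lintegral_withDensity_eq_lintegral_mul _ hum.ennreal_ofReal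
      (hFm.pow_const p).ennreal_ofReal]
    refine lintegral_congr_ae (hu0.mono fun x hx => ?_)
    simp only [Pi.mul_apply]
    rw [mul_comm, ENNReal.ofReal_mul' hx]
  have hexp : (L ^ (1 / (1 - δ)) * N ^ (-r)) ^ (p / r) * L ^ (1 - p / r) = L * (L / N) ^ p := by
    have h1δ : 1 - δ ≠ 0 := (sub_pos.2 hδ1).ne'
    have hr : r ≠ 0 := by positivity
    rw [mul_rpow (by positivity) (by positivity), ← rpow_mul hL.le, ← rpow_mul hN.le,
      mul_right_comm, ← rpow_add hL, div_rpow hL.le hN.le,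
      show -r * (p / r) = -p by field_simp, rpow_neg hN.le,
      show 1 / (1 - δ) * (p / r) + (1 - p / r) = 1 + p by rw [hr_def]; field_simp; ring,
      rpow_add hL, rpow_one]
    ring
  rw [integral_eq_lintegral_of_nonneg_ae (f := fun x => (u x / g x) ^ p * u x) (by
    filter_upwards [hF0, hu0] with x hF hux using mul_nonneg (rpow_nonneg hF _) hux)
    ((hFm.pow_const p).mul hum).aestronglyMeasurable, ← hlint]
  refine ENNReal.toReal_le_of_le_ofReal (by positivity) (hlayer.trans_eq ?_)
  rw [mul_assoc, hexp, mul_assoc]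

theorem integral_rpow_div_mul_le (hu : Integrable u μ) (hg : AEStronglyMeasurable g μ)
    (hu0 : 0 ≤ᵐ[μ] u) (hg0 : 0 ≤ᵐ[μ] g) (hL : 0 < L) (hN : 0 < N)
    (hgN : ∫ x, g x ∂μ ≤ N) (hδ0 : 0 < δ) (hδ1 : δ < 1)
    (h : ∀ E, MeasurableSet E → ∫ x in E, u x ∂μ ≤ L * ((∫ x in E, g x ∂μ) / N) ^ δ)
    {p : ℝ} (hp : 0 < p) (hpδ : p < δ / (1 - δ)) :
    ∫ x, (u x / g x) ^ p * u x ∂μ ≤ δ / (1 - δ) / (δ / (1 - δ) - p) * L * (L / N) ^ p := by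
  obtain ⟨u', hum, huu⟩ := hu.aemeasurable
  obtain ⟨g', hgm, hgg⟩ := hg.aemeasurable
  have hset : ∀ {f f' : α → ℝ}, f =ᵐ[μ] f' → ∀ E, ∫ x in E, f x ∂μ = ∫ x in E, f' x ∂μ :=
    fun hf _ => integral_congr_ae (ae_restrict_of_ae hf)
  rw [integral_congr_ae (by filter_upwards [huu, hgg] with x hux hgx; rw [hux, hgx])]
  refine integral_rpow_div_mul_le_of_measurable (hu.congr huu) hum hgm (hu0.trans_eq huu)
    (hg0.trans_eq hgg) hL hN (by rwa [← integral_congr_ae hgg]) hδ0 hδ1 (fun E hE => ?_) hp hpδ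
  rw [← hset huu, ← hset hgg]
  exact h E hE

end KermanTorchinsky

theorem rpow_neg_one_div_sub_one_eq {x w q : ℝ} (hx : 0 ≤ x) (hw : 0 < w) (hq : 1 < q) :
    x ^ (-(1 / (q - 1))) = (w ^ 2 / (x * w ^ (2 * q))) ^ (1 / (q - 1)) * w ^ 2 := by
  have hq1 : q - 1 ≠ 0 := (sub_pos.2 hq).ne'
  rcases hx.eq_or_lt with rfl | hx
  -- both sides vanish at `x = 0` by the convention `0 ^ y = 0` for `y ≠ 0`
  · rw [zero_mul, div_zero, zero_rpow (by simp [hq1]), zero_rpow (by simp [hq1]), zero_mul]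
  rw [← rpow_two, div_mul_eq_div_div_swap, div_rpow (by positivity) (by positivity),
    ← rpow_sub hw, ← rpow_mul hw.le, div_mul_eq_mul_div, ← rpow_add hw,
    show (2 - 2 * q) * (1 / (q - 1)) + 2 = 0 by field_simp; ring, rpow_zero, rpow_neg hx.le,
    inv_eq_one_div]

theorem div_mul_div_rpow_sub_one_le {ν s I κ C q : ℝ} (hq : 1 < q) (hs : 0 < s) (hν : 0 < ν)
    (hI : 0 ≤ I) (hκ : 0 ≤ κ) (hC : 0 < C)
    (hIle : I ≤ κ * (C * s) * (C * s / ν) ^ (1 / (q - 1))) :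
    ν / s * (I / s) ^ (q - 1) ≤ κ ^ (q - 1) * C ^ q := by
  have hq1 : 0 < q - 1 := sub_pos.2 hq
  calc ν / s * (I / s) ^ (q - 1)
      ≤ ν / s * (κ * C * (C * s / ν) ^ (1 / (q - 1))) ^ (q - 1) := by
        gcongr
        rw [div_le_iff₀ hs]
        linarith
    _ = κ ^ (q - 1) * C ^ q := by
        rw [mul_rpow (by positivity) (by positivity), mul_rpow hκ hC.le, ← rpow_mul (by positivity),
          one_div_mul_cancel hq1.ne', rpow_one, rpow_sub_one hC.ne']
        field_simp

theorem measurableSet_cSq (a : ℂ) : MeasurableSet (cSq a) := by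
  have hnorm : Measurable fun w : ℂ => ‖w‖ := continuous_norm.measurable
  have harg : Measurable fun w : ℂ => |arg (a * (starRingEnd ℂ) w)| :=
    (measurable_arg.comp (measurable_const.mul continuous_conj.measurable)).abs
  exact (measurableSet_lt measurable_const hnorm).inter
    ((measurableSet_lt hnorm measurable_const).inter (measurableSet_lt harg measurable_const))

theorem cSq_subset_closedBall (a : ℂ) : cSq a ⊆ Metric.closedBall 0 1 := fun w hw => by
  simpa using hw.2.1.le

theorem cSq_subset_uD (a : ℂ) : cSq a ⊆ uD := fun w hw => by
  simpa [uD] using hw.2.1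

theorem one_sub_norm_sq_pos_of_mem_cSq {a z : ℂ} (hz : z ∈ cSq a) : 0 < 1 - ‖z‖ ^ 2 := by
  have : ‖z‖ < 1 := hz.2.1
  nlinarith [norm_nonneg z]

instance : IsFiniteMeasureOnCompacts dA :=
  IsFiniteMeasureOnCompacts.smul _ (ENNReal.inv_ne_top.2 (ENNReal.ofReal_pos.2 pi_pos).ne')

theorem BqAt_le_of_forall_subset_cSq {ω : ℂ → ℝ} (hw : IsWeight ω) {q δ C : ℝ} (hq : 1 < q)
    (hδq : 1 / q < δ) (hδ1 : δ < 1) (hC : 0 < C) {a : ℂ}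
    (h : ∀ E : Set ℂ, MeasurableSet E → E ⊆ cSq a →
      (∫ z in E, (1 - ‖z‖ ^ 2) ^ 2 ∂dA) / eArea (cSq a) ^ 2 ≤
        C * ((∫ z in E, ω z * (1 - ‖z‖ ^ 2) ^ (2 * q) ∂dA) /
          ∫ z in cSq a, ω z * (1 - ‖z‖ ^ 2) ^ (2 * q) ∂dA) ^ δ) :
    BqAt q ω a ≤ (δ / (1 - δ) / (δ / (1 - δ) - 1 / (q - 1))) ^ (q - 1) * C ^ q := by
  set S := cSq a
  set s := eArea S ^ 2
  set ν := ∫ z in S, ω z * (1 - ‖z‖ ^ 2) ^ (2 * q) ∂dA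
  have hS := measurableSet_cSq a
  have hq1 : 0 < q - 1 := sub_pos.2 hq
  have hδ0 : 0 < δ := lt_trans (by positivity) hδq
  have h1δ : 0 < 1 - δ := sub_pos.2 hδ1
  have hpδ : 1 / (q - 1) < δ / (1 - δ) := by
    rw [div_lt_div_iff₀ hq1 h1δ]
    rw [div_lt_iff₀ (by positivity)] at hδq
    linarith
  have hκ : 0 ≤ δ / (1 - δ) / (δ / (1 - δ) - 1 / (q - 1)) :=
    div_nonneg (by positivity) (sub_pos.2 hpδ).le
  have hI0 : 0 ≤ ∫ z in S, ω z ^ (-(1 / (q - 1))) ∂dA :=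
    setIntegral_nonneg hS fun z _ => rpow_nonneg (hw.1 z) _
  show ν / s * ((∫ z in S, ω z ^ (-(1 / (q - 1))) ∂dA) / s) ^ (q - 1) ≤ _
  have hs0 : 0 ≤ s := sq_nonneg _
  have hν0 : 0 ≤ ν := setIntegral_nonneg hS fun z hz =>
    mul_nonneg (hw.1 z) (rpow_nonneg (one_sub_norm_sq_pos_of_mem_cSq hz).le _)
  rcases hs0.eq_or_lt with hs | hs
  · rw [← hs, div_zero, zero_mul]
    positivity
  rcases hν0.eq_or_lt with hν | hν
  · rw [← hν, zero_div, zero_mul]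
    positivity
  have hu : Integrable (fun z : ℂ => (1 - ‖z‖ ^ 2) ^ 2) (dA.restrict S) :=
    (ContinuousOn.integrableOn_compact (isCompact_closedBall 0 1) (by fun_prop)).mono_set
      (cSq_subset_closedBall a)
  have hg : AEStronglyMeasurable (fun z => ω z * (1 - ‖z‖ ^ 2) ^ (2 * q)) (dA.restrict S) :=
    have hw2 : Measurable fun z : ℂ => 1 - ‖z‖ ^ 2 := by fun_prop
    (hw.2.mono_set (cSq_subset_uD a)).aestronglyMeasurable.mul
      (hw2.pow_const _).aestronglyMeasurable
  have hg0 : 0 ≤ᵐ[dA.restrict S] fun z => ω z * (1 - ‖z‖ ^ 2) ^ (2 * q) :=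
    ae_restrict_of_forall_mem hS fun z hz =>
      mul_nonneg (hw.1 z) (rpow_nonneg (one_sub_norm_sq_pos_of_mem_cSq hz).le _)
  have hdom : ∀ E, MeasurableSet E → ∫ z in E, (1 - ‖z‖ ^ 2) ^ 2 ∂dA.restrict S ≤
      C * s * ((∫ z in E, ω z * (1 - ‖z‖ ^ 2) ^ (2 * q) ∂dA.restrict S) / ν) ^ δ := by
    intro E hE
    have hES := h (E ∩ S) (hE.inter hS) inter_subset_right
    rw [div_le_iff₀ hs] at hES
    rw [Measure.restrict_restrict hE]
    linarith
  have hI : ∫ z in S, ω z ^ (-(1 / (q - 1))) ∂dA =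
      ∫ z in S, ((1 - ‖z‖ ^ 2) ^ 2 / (ω z * (1 - ‖z‖ ^ 2) ^ (2 * q))) ^ (1 / (q - 1)) *
        (1 - ‖z‖ ^ 2) ^ 2 ∂dA :=
    setIntegral_congr_fun hS fun z hz =>
      rpow_neg_one_div_sub_one_eq (hw.1 z) (one_sub_norm_sq_pos_of_mem_cSq hz) hq
  refine div_mul_div_rpow_sub_one_le hq hs hν hI0 hκ hC (hI.trans_le ?_)
  exact integral_rpow_div_mul_le hu hg (ae_of_all _ fun z => sq_nonneg _) hg0 (by positivity) hν
    le_rfl hδ0 hδ1 hdom (by positivity) hpδ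

/-- a sufficient Kerman–Torchinsky type condition for membership in `B_q`. -/
theorem Bq_sufficient_condition (ω : ℂ → ℝ) (hw : IsWeight ω) (hpos : AEPos ω)
    (q δ C : ℝ) (hq : 1 < q) (hδ1 : 1 / q < δ) (hδ2 : δ < 1) (hC : 0 < C)
    (h : ∀ a : ℂ, a ≠ 0 → ‖a‖ < 1 → ∀ E : Set ℂ, MeasurableSet E → E ⊆ cSq a →
      (∫ z in E, (1 - ‖z‖ ^ 2) ^ 2 ∂dA) / eArea (cSq a) ^ 2 ≤
        C * ((∫ z in E, ω z * (1 - ‖z‖ ^ 2) ^ (2 * q) ∂dA) /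
          ∫ z in cSq a, ω z * (1 - ‖z‖ ^ 2) ^ (2 * q) ∂dA) ^ δ) :
    MemBq q ω :=
  ⟨hq, hpos, _, fun a ha0 ha1 =>
    BqAt_le_of_forall_subset_cSq hw hq hδ1 hδ2 hC (h a ha0 ha1)⟩

end
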